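/- (Expected bound on B^t) Suppose Assumptions A1, A2 and A3 hold. Then for every outer iteration t, with B^t := | p ⟨x^{t,0,0} − x*, ∇F_m(x^{t,0,0})⟩ − Σ_{i=0}^{s−1} Σ_{j=0}^{p−1} ⟨ x^{t,i,j} − x*, U_{σ(i+1)} ∇_{σ(i+1)} f_{π(j)}(x^{t,i,j}) ⟩ |, the Block-SMOO iterates satisfy E[B^t] ≤ (1/2) α_t σ (ΔL + σ) s² p². -/

import Mathlib

/-!
Since the blocks `σ(1), …, σ(s)` partition the coordinates and `π` takes each value `k`
exactly `m_k` times, `p ⟨x^{t,0,0} − x*, ∇F_m(x^{t,0,0})⟩` splits into the `s p` terms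
`⟨x^{t,0,0} − x*, U_{σ(i+1)} ∇_{σ(i+1)} f_{π(j)}(x^{t,0,0})⟩`. Compared termwise with the
sum in `B^t`, each difference is at most `(ΔL + σ) ‖x^{t,i,j} − x^{t,0,0}‖` by the Lipschitz
and bounded gradients and `‖x^{t,0,0} − x*‖ ≤ Δ`. By the triangle inequality along the
iterates, this drift is at most `α_t` times the sum of the stochastic-gradient norms of the
`i p + j` preceding steps, and each of these norms has expectation at most `σ` because
`(E‖g‖)² ≤ E‖g‖² ≤ σ²`. Finally `∑_{i<s} ∑_{j<p} (i p + j) ≤ s² p² / 2`.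
-/

open MeasureTheory Finset
open scoped RealInnerProductSpace BigOperators

/-- The orthogonal projection `U_b * U_bᵀ` onto the coordinates of block `b`,
where `blk` assigns each coordinate to its block; so for a differentiable `h`,
`blockProj blk b (gradient h x)` represents `U_b ∇_b h(x)`, and block-gradient norms
and inner products can be expressed through it. -/
noncomputable def blockProj {n s : ℕ} (blk : Fin n → Fin s) (b : Fin s)
    (v : EuclideanSpace ℝ (Fin n)) : EuclideanSpace ℝ (Fin n) :=
  WithLp.toLp 2 (fun k => if blk k = b then v k else 0)

section BlockProj

variable {n s : ℕ} (blk : Fin n → Fin s)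

lemma blockProj_sub (b : Fin s) (u v : EuclideanSpace ℝ (Fin n)) :
    blockProj blk b (u - v) = blockProj blk b u - blockProj blk b v := by
  ext k
  simp only [blockProj, PiLp.sub_apply]
  split_ifs <;> simp

lemma norm_blockProj_le (b : Fin s) (v : EuclideanSpace ℝ (Fin n)) :
    ‖blockProj blk b v‖ ≤ ‖v‖ := by
  simp only [EuclideanSpace.norm_eq, blockProj]
  gcongr with k
  split_ifs <;> simp

lemma sum_blockProj (v : EuclideanSpace ℝ (Fin n)) : ∑ b, blockProj blk b v = v := by
  ext k
  simp [blockProj, Finset.sum_apply]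

end BlockProj

section InnerProductSpace

variable {E : Type*} [NormedAddCommGroup E] [InnerProductSpace ℝ E]

lemma abs_inner_sub_inner_le {x y z a b : E} {Δ L σ : ℝ} (hxz : ‖x - z‖ ≤ Δ) (hΔ : 0 ≤ Δ)
    (hab : ‖a - b‖ ≤ L * ‖x - y‖) (hb : ‖b‖ ≤ σ) :
    |⟪x - z, a⟫ - ⟪y - z, b⟫| ≤ (Δ * L + σ) * ‖x - y‖ := by
  have hsplit : ⟪x - z, a⟫ - ⟪y - z, b⟫ = ⟪x - z, a - b⟫ + ⟪x - y, b⟫ := by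
    rw [show x - y = (x - z) - (y - z) by abel]
    simp only [inner_sub_left, inner_sub_right]
    ring
  rw [hsplit]
  calc |⟪x - z, a - b⟫ + ⟪x - y, b⟫| ≤ ‖x - z‖ * ‖a - b‖ + ‖x - y‖ * ‖b‖ :=
        (abs_add_le _ _).trans
          (add_le_add (abs_real_inner_le_norm _ _) (abs_real_inner_le_norm _ _))
    _ ≤ Δ * (L * ‖x - y‖) + ‖x - y‖ * σ := by gcongr
    _ = (Δ * L + σ) * ‖x - y‖ := by ring

variable [CompleteSpace E]

lemma gradient_sum_const_mul {ι : Type*} (S : Finset ι) (c : ι → ℝ) {f : ι → E → ℝ} {x : E}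
    (hf : ∀ k ∈ S, DifferentiableAt ℝ (f k) x) :
    gradient (fun y => ∑ k ∈ S, c k * f k y) x = ∑ k ∈ S, c k • gradient (f k) x := by
  have hderiv : HasFDerivAt (fun y => ∑ k ∈ S, c k * f k y)
      (∑ k ∈ S, c k • fderiv ℝ (f k) x) x :=
    HasFDerivAt.fun_sum fun k hk => (hf k hk).hasFDerivAt.const_mul (c k)
  rw [hderiv.hasGradientAt.gradient, map_sum]
  simp [gradient]

lemma natCast_smul_gradient_eq_sum {q p : ℕ} (hp : p ≠ 0) {f : Fin q → E → ℝ} {Fm : E → ℝ}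
    {wt : Fin q → ℕ} {π : ℕ → Fin q} (hdiff : ∀ k, Differentiable ℝ (f k))
    (hFm : ∀ x, Fm x = ∑ k, ((wt k : ℝ) / (p : ℝ)) * f k x)
    (hπ : ∀ k, ((Finset.range p).filter (fun j => π j = k)).card = wt k) (x : E) :
    (p : ℝ) • gradient Fm x = ∑ j ∈ range p, gradient (f (π j)) x := by
  rw [funext hFm, gradient_sum_const_mul _ _ fun k _ => hdiff k x,
    ← sum_fiberwise' (range p) π fun k => gradient (f k) x, smul_sum]
  refine sum_congr rfl fun k _ => ?_
  rw [sum_const, hπ k, smul_smul, mul_div_cancel₀ _ (Nat.cast_ne_zero.mpr hp),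
    Nat.cast_smul_eq_nsmul]

end InnerProductSpace

lemma abs_inner_sum_sub_sum_inner_blockProj_le {n s : ℕ} (blk : Fin n → Fin s)
    (σb : Equiv.Perm (Fin s)) {g : ℕ → EuclideanSpace ℝ (Fin n) → EuclideanSpace ℝ (Fin n)}
    {L σ Δ : ℝ} (hLip : ∀ j x y, ‖g j x - g j y‖ ≤ L * ‖x - y‖) (hg : ∀ j x, ‖g j x‖ ≤ σ)
    {x z : EuclideanSpace ℝ (Fin n)} (hxz : ‖x - z‖ ≤ Δ) (hΔ : 0 ≤ Δ) (p : ℕ)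
    (y : Fin s → ℕ → EuclideanSpace ℝ (Fin n)) :
    |⟪x - z, ∑ j ∈ range p, g j x⟫ -
        ∑ i, ∑ j ∈ range p, ⟪y i j - z, blockProj blk (σb i) (g j (y i j))⟫| ≤
      (Δ * L + σ) * ∑ i, ∑ j ∈ range p, ‖x - y i j‖ := by
  have hsplit : ⟪x - z, ∑ j ∈ range p, g j x⟫ =
      ∑ i, ∑ j ∈ range p, ⟪x - z, blockProj blk (σb i) (g j x)⟫ := by
    rw [inner_sum, sum_comm]
    refine sum_congr rfl fun j _ => ?_
    rw [← inner_sum, Equiv.sum_comp σb fun b => blockProj blk b (g j x), sum_blockProj]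
  rw [hsplit, ← sum_sub_distrib, mul_sum]
  refine (abs_sum_le_sum_abs _ _).trans (sum_le_sum fun i _ => ?_)
  rw [← sum_sub_distrib, mul_sum]
  refine (abs_sum_le_sum_abs _ _).trans (sum_le_sum fun j _ => ?_)
  refine abs_inner_sub_inner_le hxz hΔ ?_ ((norm_blockProj_le _ _ _).trans (hg j _))
  rw [← blockProj_sub]
  exact (norm_blockProj_le _ _ _).trans (hLip j x (y i j))

lemma integral_le_of_condExp_sq_le {Ω : Type*} {m : MeasurableSpace Ω} [mΩ : MeasurableSpace Ω]
    {μ : Measure Ω} [IsProbabilityMeasure μ] (hm : m ≤ mΩ)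
    {g : Ω → ℝ} (hg : AEStronglyMeasurable g μ) (hg2 : Integrable (fun ω => g ω ^ 2) μ)
    {σ : ℝ} (hσ : 0 ≤ σ) (h : ∀ᵐ ω ∂μ, μ[fun ω => g ω ^ 2 | m] ω ≤ σ ^ 2) :
    ∫ ω, g ω ∂μ ≤ σ := by
  have hsq : ∫ ω, g ω ^ 2 ∂μ ≤ σ ^ 2 := by
    rw [← integral_condExp hm]
    simpa using integral_mono_ae integrable_condExp (integrable_const (σ ^ 2)) h
  have hvar := ProbabilityTheory.variance_nonneg g μ
  rw [ProbabilityTheory.variance_eq_sub ((memLp_two_iff_integrable_sq hg).mpr hg2)] at hvar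
  have hmean : (∫ ω, g ω ∂μ) ^ 2 ≤ σ ^ 2 := by
    simp only [Pi.pow_apply] at hvar
    linarith
  exact (abs_le_of_sq_le_sq' hmean hσ).2

def precedingSum (d : ℕ → ℕ → ℝ) (p i j : ℕ) : ℝ :=
  ∑ i' ∈ range i, ∑ l ∈ range p, d i' l + ∑ l ∈ range j, d i l

lemma dist_le_precedingSum {α : Type*} [PseudoMetricSpace α] {x : ℕ → ℕ → α}
    {d : ℕ → ℕ → ℝ} {s p : ℕ} (hrow : ∀ i < s, x (i + 1) 0 = x i p)
    (hstep : ∀ i < s, ∀ j < p, dist (x i j) (x i (j + 1)) ≤ d i j)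
    {i j : ℕ} (hi : i < s) (hj : j ≤ p) :
    dist (x 0 0) (x i j) ≤ precedingSum d p i j := by
  have hrowDist : ∀ i < s, ∀ j ≤ p, dist (x i 0) (x i j) ≤ ∑ l ∈ range j, d i l :=
    fun i hi j hj => dist_le_range_sum_of_dist_le (f := x i) j fun hl => hstep i hi _ (by omega)
  have hcol : dist (x 0 0) (x i 0) ≤ ∑ i' ∈ range i, ∑ l ∈ range p, d i' l :=
    dist_le_range_sum_of_dist_le (f := fun i => x i 0) i fun {k} hk => by
      simpa only [hrow k (hk.trans hi)] using hrowDist k (hk.trans hi) p le_rfl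
  exact (dist_triangle _ (x i 0) _).trans (add_le_add hcol (hrowDist i hi j hj))

lemma norm_sub_le_precedingSum_of_eq_sub_smul {n s p : ℕ} (blk : Fin n → Fin s)
    (σb : Equiv.Perm (Fin s)) {x g : ℕ → ℕ → EuclideanSpace ℝ (Fin n)} {a : ℝ} (ha : 0 ≤ a)
    (hupd : ∀ i (hi : i < s), ∀ j < p,
      x i (j + 1) = x i j - a • blockProj blk (σb ⟨i, hi⟩) (g i j))
    (hrow : ∀ i < s, x (i + 1) 0 = x i p) {i j : ℕ} (hi : i < s) (hj : j ≤ p) :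
    ‖x 0 0 - x i j‖ ≤ precedingSum (fun i j => a * ‖g i j‖) p i j := by
  refine dist_eq_norm (x 0 0) _ ▸ dist_le_precedingSum hrow (fun i hi j hj => ?_) hi hj
  rw [dist_eq_norm, hupd i hi j hj, sub_sub_cancel, norm_smul, Real.norm_of_nonneg ha]
  exact mul_le_mul_of_nonneg_left (norm_blockProj_le _ _ _) ha

lemma sum_sum_mul_add_le (s p : ℕ) :
    ∑ i ∈ range s, ∑ j ∈ range p, ((i : ℝ) * p + j) ≤ (s : ℝ) ^ 2 * p ^ 2 / 2 := by
  have hgauss : ∀ m : ℕ, ∑ j ∈ range m, (j : ℝ) = m * (m - 1) / 2 := fun m => by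
    induction m with
    | zero => simp
    | succ m ih => rw [sum_range_succ, ih]; push_cast; ring
  have hsum : ∑ i ∈ range s, ∑ j ∈ range p, ((i : ℝ) * p + j) =
      p ^ 2 * ∑ i ∈ range s, (i : ℝ) + s * ∑ j ∈ range p, (j : ℝ) := by
    simp only [sum_add_distrib, sum_const, card_range, nsmul_eq_mul, mul_sum]
    ring_nf
  rw [hsum, hgauss, hgauss]
  nlinarith [(by positivity : (0 : ℝ) ≤ s * p)]

section Integral

variable {Ω : Type*} [MeasurableSpace Ω] {μ : Measure Ω} {D : ℕ → ℕ → Ω → ℝ} {s p : ℕ} {c : ℝ}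

lemma integrable_precedingSum (hD : ∀ i j, Integrable (D i j) μ) (i j : ℕ) :
    Integrable (fun ω => precedingSum (fun i j => D i j ω) p i j) μ := by
  unfold precedingSum
  fun_prop

lemma integrable_sum_precedingSum (hD : ∀ i j, Integrable (D i j) μ) :
    Integrable (fun ω => ∑ i : Fin s, ∑ j ∈ range p, precedingSum (fun i j => D i j ω) p i j) μ :=
  integrable_finsetSum _ fun (i : Fin s) _ => integrable_finsetSum _ fun j _ =>
    integrable_precedingSum hD i j

lemma integral_precedingSum_le (hD : ∀ i j, Integrable (D i j) μ)
    (hc : ∀ i < s, ∀ j < p, ∫ ω, D i j ω ∂μ ≤ c) {i j : ℕ} (hi : i < s) (hj : j ≤ p) :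
    ∫ ω, precedingSum (fun i j => D i j ω) p i j ∂μ ≤ c * (i * p + j) := by
  unfold precedingSum
  rw [integral_add (by fun_prop) (by fun_prop), integral_finsetSum _ (by fun_prop)]
  simp only [integral_finsetSum _ fun _ _ => hD _ _]
  calc ∑ i' ∈ range i, ∑ l ∈ range p, ∫ ω, D i' l ω ∂μ + ∑ l ∈ range j, ∫ ω, D i l ω ∂μ
      ≤ ∑ i' ∈ range i, ∑ l ∈ range p, c + ∑ l ∈ range j, c := by
        gcongr with i' hi' l hl l hl
        · exact hc i' ((mem_range.mp hi').trans hi) l (mem_range.mp hl)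
        · exact hc i hi l ((mem_range.mp hl).trans_le hj)
    _ = c * (i * p + j) := by simp only [sum_const, card_range, nsmul_eq_mul]; ring

lemma integral_sum_precedingSum_le (hD : ∀ i j, Integrable (D i j) μ) (hc0 : 0 ≤ c)
    (hc : ∀ i < s, ∀ j < p, ∫ ω, D i j ω ∂μ ≤ c) :
    ∫ ω, ∑ i : Fin s, ∑ j ∈ range p, precedingSum (fun i j => D i j ω) p i j ∂μ ≤
      c * ((s : ℝ) ^ 2 * p ^ 2 / 2) := by
  rw [integral_finsetSum univ (f := fun (i : Fin s) ω =>
      ∑ j ∈ range p, precedingSum (fun i j => D i j ω) p i j)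
    fun i _ => integrable_finsetSum _ fun j _ => integrable_precedingSum hD i j]
  simp only [integral_finsetSum _ fun j _ => integrable_precedingSum hD _ j]
  calc ∑ i : Fin s, ∑ j ∈ range p, ∫ ω, precedingSum (fun i j => D i j ω) p i j ∂μ
      ≤ ∑ i : Fin s, ∑ j ∈ range p, c * ((i : ℕ) * p + j) := by
        gcongr with i _ j hj
        exact integral_precedingSum_le hD hc i.isLt (mem_range.mp hj).le
    _ = c * ∑ i ∈ range s, ∑ j ∈ range p, ((i : ℝ) * p + j) := by
        rw [Fin.sum_univ_eq_sum_range (fun i => ∑ j ∈ range p, c * ((i : ℝ) * p + j)), mul_sum]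
        simp only [mul_sum]
    _ ≤ c * ((s : ℝ) ^ 2 * p ^ 2 / 2) := by gcongr; exact sum_sum_mul_add_le s p

end Integral

theorem errorTermB_expected_bound_general
    -- problem data: `n` variables partitioned into `s` blocks by `blk`,
    -- `q` objectives `f k`, frequency vector `wt` with budget `p = ∑ k, wt k`,
    -- weighted-sum function `Fm`, block permutation `σb`, index mapping `π`
    {n s q : ℕ} (blk : Fin n → Fin s)
    (f : Fin q → EuclideanSpace ℝ (Fin n) → ℝ)
    (wt : Fin q → ℕ) (p : ℕ) (hp1 : 1 ≤ p)
    (Fm : EuclideanSpace ℝ (Fin n) → ℝ)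
    (hFm : ∀ x, Fm x = ∑ k, ((wt k : ℝ) / (p : ℝ)) * f k x)
    (σb : Equiv.Perm (Fin s)) (π : ℕ → Fin q)
    (hπ : ∀ k, ((Finset.range p).filter (fun j => π j = k)).card = wt k)
    -- probability space and the filtration `𝓕 t i j` generated by `x^{0,0,0}`
    -- and all the `ξ`'s preceding step `(t,i,j)`
    {Ω : Type*} [mΩ : MeasurableSpace Ω] (μ : Measure Ω) [IsProbabilityMeasure μ]
    (𝓕 : ℕ → ℕ → ℕ → MeasurableSpace Ω)
    (hFle : ∀ t i j, 𝓕 t i j ≤ mΩ)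
    -- Block-SMOO iterates `X t i j` and stochastic gradients `G t i j`
    (X G : ℕ → ℕ → ℕ → Ω → EuclideanSpace ℝ (Fin n))
    (α : ℕ → ℝ) (hα : ∀ t, 0 < α t)
    (hupd : ∀ t i (hi : i < s), ∀ j < p, ∀ ω,
      X t i (j + 1) ω = X t i j ω - α t • blockProj blk (σb ⟨i, hi⟩) (G t i j ω))
    (hrow : ∀ t, ∀ i < s, X t (i + 1) 0 = X t i p)
    -- Assumption A1: `L`-smoothness of each `f k` and lower bound of `Fm`
    (L : ℝ) (hLpos : 0 < L)
    (hdiff : ∀ k, Differentiable ℝ (f k))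
    (hLip : ∀ k x y, ‖gradient (f k) x - gradient (f k) y‖ ≤ L * ‖x - y‖)
    -- Assumption A2: unbiasedness and conditionally bounded second moment
    (σv : ℝ) (hσv : 0 ≤ σv)
    (hGint : ∀ t i j, Integrable (G t i j) μ)
    (hG2int : ∀ t i j, Integrable (fun ω => ‖G t i j ω‖ ^ 2) μ)
    (h2nd : ∀ t i, i < s → ∀ j < p,
      ∀ᵐ ω ∂μ, (μ[fun ω' => ‖G t i j ω'‖ ^ 2 | 𝓕 t i j]) ω ≤ σv ^ 2)
    -- Assumption A2 (final clause): the true gradients are bounded by `σv`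
    (hgb : ∀ k x, ‖gradient (f k) x‖ ≤ σv)
    -- Assumption A3: convexity, existence of a minimizer, and bounded iterates
    (xstar : EuclideanSpace ℝ (Fin n))
    (Δ : ℝ) (hΔ : ∀ t, ∀ᵐ ω ∂μ, ‖X t 0 0 ω - xstar‖ ≤ Δ)
    (t : ℕ)
    (B : Ω → ℝ)
    (hB : ∀ ω, B ω =
      |(p : ℝ) * ⟪X t 0 0 ω - xstar, gradient Fm (X t 0 0 ω)⟫ -
        ∑ i : Fin s, ∑ j ∈ Finset.range p,
          ⟪X t (i : ℕ) j ω - xstar,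
            blockProj blk (σb i) (gradient (f (π j)) (X t (i : ℕ) j ω))⟫|) :
    ∫ ω, B ω ∂μ ≤
      (1 / 2) * α t * σv * (Δ * L + σv) * (s : ℝ) ^ 2 * (p : ℝ) ^ 2 := by
  have hΔ0 : 0 ≤ Δ := (norm_nonneg _).trans (hΔ t).exists.choose_spec
  set D : ℕ → ℕ → Ω → ℝ := fun i j ω => α t * ‖G t i j ω‖
  have hDint : ∀ i j, Integrable (D i j) μ := fun i j => (hGint t i j).norm.const_mul _
  have hDmean : ∀ i < s, ∀ j < p, ∫ ω, D i j ω ∂μ ≤ α t * σv := fun i hi j hj => by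
    rw [integral_const_mul]
    exact mul_le_mul_of_nonneg_left (integral_le_of_condExp_sq_le (hFle t i j)
      (hGint t i j).norm.aestronglyMeasurable (hG2int t i j) hσv (h2nd t i hi j hj)) (hα t).le
  have hB_le : ∀ᵐ ω ∂μ, B ω ≤
      (Δ * L + σv) * ∑ i : Fin s, ∑ j ∈ range p, precedingSum (fun i j => D i j ω) p i j := by
    filter_upwards [hΔ t] with ω hω
    rw [hB, ← real_inner_smul_right, natCast_smul_gradient_eq_sum (by omega) hdiff hFm hπ]
    refine (abs_inner_sum_sub_sum_inner_blockProj_le blk σb (fun j => hLip (π j))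
      (fun j => hgb (π j)) hω hΔ0 p _).trans ?_
    gcongr with i _ j hj
    exact norm_sub_le_precedingSum_of_eq_sub_smul blk σb (x := fun i j => X t i j ω)
      (g := fun i j => G t i j ω) (hα t).le (fun i hi j hj => hupd t i hi j hj ω)
      (fun i hi => congrFun (hrow t i hi) ω) i.isLt (mem_range.mp hj).le
  calc ∫ ω, B ω ∂μ
      ≤ ∫ ω, (Δ * L + σv) *
          ∑ i : Fin s, ∑ j ∈ range p, precedingSum (fun i j => D i j ω) p i j ∂μ :=
        integral_mono_of_nonneg (ae_of_all _ fun ω => (hB ω).symm ▸ abs_nonneg _)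
          ((integrable_sum_precedingSum hDint).const_mul _) hB_le
    _ ≤ (Δ * L + σv) * (α t * σv * ((s : ℝ) ^ 2 * p ^ 2 / 2)) := by
        rw [integral_const_mul]
        gcongr
        exact integral_sum_precedingSum_le hDint (mul_nonneg (hα t).le hσv) hDmean
    _ = (1 / 2) * α t * σv * (Δ * L + σv) * (s : ℝ) ^ 2 * (p : ℝ) ^ 2 := by ring

/-- Expected bound on the error term `B^t`: `E[B^t] ≤ (1/2) α_t σ (ΔL + σ) s² p²`. -/
theorem errorTermB_expected_bound
    -- problem data: `n` variables partitioned into `s` blocks by `blk`,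
    -- `q` objectives `f k`, frequency vector `wt` with budget `p = ∑ k, wt k`,
    -- weighted-sum function `Fm`, block permutation `σb`, index mapping `π`
    {n s q : ℕ} (blk : Fin n → Fin s)
    (f : Fin q → EuclideanSpace ℝ (Fin n) → ℝ)
    (wt : Fin q → ℕ) (p : ℕ) (hp : p = ∑ k, wt k) (hp1 : 1 ≤ p)
    (Fm : EuclideanSpace ℝ (Fin n) → ℝ)
    (hFm : ∀ x, Fm x = ∑ k, ((wt k : ℝ) / (p : ℝ)) * f k x)
    (σb : Equiv.Perm (Fin s)) (π : ℕ → Fin q)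
    (hπ : ∀ k, ((Finset.range p).filter (fun j => π j = k)).card = wt k)
    -- probability space and the filtration `𝓕 t i j` generated by `x^{0,0,0}`
    -- and all the `ξ`'s preceding step `(t,i,j)`
    {Ω : Type*} [mΩ : MeasurableSpace Ω] (μ : Measure Ω) [IsProbabilityMeasure μ]
    (𝓕 : ℕ → ℕ → ℕ → MeasurableSpace Ω)
    (hFle : ∀ t i j, 𝓕 t i j ≤ mΩ)
    (hFmono : ∀ t i j, 𝓕 t i j ≤ 𝓕 t i (j + 1))
    (hFmono' : ∀ t i, 𝓕 t i p ≤ 𝓕 t (i + 1) 0)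
    (hFmono'' : ∀ t, 𝓕 t s p ≤ 𝓕 (t + 1) 0 0)
    -- Block-SMOO iterates `X t i j` and stochastic gradients `G t i j`
    (X G : ℕ → ℕ → ℕ → Ω → EuclideanSpace ℝ (Fin n))
    (α : ℕ → ℝ) (hα : ∀ t, 0 < α t)
    (hupd : ∀ t i (hi : i < s), ∀ j < p, ∀ ω,
      X t i (j + 1) ω = X t i j ω - α t • blockProj blk (σb ⟨i, hi⟩) (G t i j ω))
    (hrow : ∀ t, ∀ i < s, X t (i + 1) 0 = X t i p)
    (hout : ∀ t, X (t + 1) 0 0 = X t s p)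
    (hXmeas : ∀ t i j, StronglyMeasurable[𝓕 t i j] (X t i j))
    (hGmeas : ∀ t i j, StronglyMeasurable[𝓕 t i (j + 1)] (G t i j))
    -- Assumption A1: `L`-smoothness of each `f k` and lower bound of `Fm`
    (L : ℝ) (hLpos : 0 < L)
    (hdiff : ∀ k, Differentiable ℝ (f k))
    (hLip : ∀ k x y, ‖gradient (f k) x - gradient (f k) y‖ ≤ L * ‖x - y‖)
    (Fstar : ℝ) (hFstar : Fstar = ⨅ x, Fm x) (hbdd : BddBelow (Set.range Fm))
    -- Assumption A2: unbiasedness and conditionally bounded second moment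
    (σv : ℝ) (hσv : 0 ≤ σv)
    (hGint : ∀ t i j, Integrable (G t i j) μ)
    (hG2int : ∀ t i j, Integrable (fun ω => ‖G t i j ω‖ ^ 2) μ)
    (hunb : ∀ t i, i < s → ∀ j < p,
      μ[G t i j | 𝓕 t i j] =ᵐ[μ] fun ω => gradient (f (π j)) (X t i j ω))
    (h2nd : ∀ t i, i < s → ∀ j < p,
      ∀ᵐ ω ∂μ, (μ[fun ω' => ‖G t i j ω'‖ ^ 2 | 𝓕 t i j]) ω ≤ σv ^ 2)
    -- Assumption A2 (final clause): the true gradients are bounded by `σv`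
    (hgb : ∀ k x, ‖gradient (f k) x‖ ≤ σv)
    -- Assumption A3: convexity, existence of a minimizer, and bounded iterates
    (hconv : ∀ k, ConvexOn ℝ Set.univ (f k))
    (xstar : EuclideanSpace ℝ (Fin n)) (hmin : ∀ x, Fm xstar ≤ Fm x)
    (Δ : ℝ) (hΔ : ∀ t, ∀ᵐ ω ∂μ, ‖X t 0 0 ω - xstar‖ ≤ Δ)
    (t : ℕ)
    (B : Ω → ℝ)
    (hB : ∀ ω, B ω =
      |(p : ℝ) * ⟪X t 0 0 ω - xstar, gradient Fm (X t 0 0 ω)⟫ -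
        ∑ i : Fin s, ∑ j ∈ Finset.range p,
          ⟪X t (i : ℕ) j ω - xstar,
            blockProj blk (σb i) (gradient (f (π j)) (X t (i : ℕ) j ω))⟫|)
    (hBint : Integrable B μ) :
    ∫ ω, B ω ∂μ ≤
      (1 / 2) * α t * σv * (Δ * L + σv) * (s : ℝ) ^ 2 * (p : ℝ) ^ 2 :=
  errorTermB_expected_bound_general blk f wt p hp1 Fm hFm σb π hπ (mΩ := mΩ) μ 𝓕 hFle X G α hα hupd
    hrow L hLpos hdiff hLip σv hσv hGint hG2int h2nd hgb xstar Δ hΔ t B hB
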